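/- arXiv:2408.13140 — 3 statements merged into one kernel-verified Lean document; each statement's English description precedes it below -/
import Mathlib

section
/- With the notation of the decoupled and joint piecewise linear fitting problems: if (w*_j, b*_j)_{j=1}^q is an optimal solution to the joint problem with value β*, and B_j is defined as the set of sample indices i for which max_{k}(w*_kᵀκ_i + b*_k) = w*_jᵀκ_i + b*_j (with ties broken so the B_j partition {1,…,N}), then ∑_{j=1}^q β*_j = β*, where β*_j is the optimal value of the decoupled problem over B_j. -/
noncomputable def fmax {q : ℕ} [NeZero q] (g : Fin q → ℝ) : ℝ :=
  Finset.univ.sup' Finset.univ_nonempty g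

noncomputable def fmin {q : ℕ} [NeZero q] (g : Fin q → ℝ) : ℝ :=
  Finset.univ.inf' Finset.univ_nonempty g

noncomputable def dot {d : ℕ} (w κ : Fin d → ℝ) : ℝ := ∑ m, w m * κ m

theorem stmt1 {d N q : ℕ} [NeZero q] (f : (Fin d → ℝ) → ℝ)
    (κ : Fin N → Fin d → ℝ)
    (wstar : Fin q → Fin d → ℝ) (bstar : Fin q → ℝ) (βstar : ℝ)
    (hβstar : IsLeast
      {β : ℝ | ∃ (w : Fin q → Fin d → ℝ) (b : Fin q → ℝ),
        (∀ i : Fin N, fmax (fun j => dot (w j) (κ i) + b j) ≤ f (κ i)) ∧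
        β = (1 / N) * ∑ i : Fin N,
              (f (κ i) - fmax (fun j => dot (w j) (κ i) + b j))} βstar)
    (hfeas : ∀ i : Fin N, fmax (fun j => dot (wstar j) (κ i) + bstar j) ≤ f (κ i))
    (hopt : βstar = (1 / N) * ∑ i : Fin N,
        (f (κ i) - fmax (fun j => dot (wstar j) (κ i) + bstar j)))
    (P : Fin N → Fin q)
    (hP : ∀ i : Fin N, fmax (fun k => dot (wstar k) (κ i) + bstar k)
            = dot (wstar (P i)) (κ i) + bstar (P i))
    (βj : Fin q → ℝ)
    (hβj : ∀ j : Fin q, IsLeast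
      {β : ℝ | ∃ (w : Fin d → ℝ) (b : ℝ),
        (∀ i : Fin N, dot w (κ i) + b ≤ f (κ i)) ∧
        β = (1 / N) * ∑ i ∈ Finset.univ.filter (fun i => P i = j),
              (f (κ i) - (dot w (κ i) + b))} (βj j)) :
    ∑ j : Fin q, βj j = βstar := by
  have hN : (0:ℝ) ≤ 1 / N := by positivity
  apply le_antisymm
  · -- ∑ βj ≤ βstar
    have h1 : ∀ j : Fin q, βj j ≤ (1/N) * ∑ i ∈ Finset.univ.filter (fun i => P i = j),
        (f (κ i) - (dot (wstar j) (κ i) + bstar j)) := by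
      intro j
      refine (hβj j).2 ⟨wstar j, bstar j, fun i => le_trans ?_ (hfeas i), rfl⟩
      exact Finset.le_sup' (f := fun k => dot (wstar k) (κ i) + bstar k) (Finset.mem_univ j)
    calc ∑ j : Fin q, βj j
        ≤ ∑ j : Fin q, (1/N) * ∑ i ∈ Finset.univ.filter (fun i => P i = j),
            (f (κ i) - (dot (wstar j) (κ i) + bstar j)) :=
          Finset.sum_le_sum fun j _ => h1 j
      _ = (1/N) * ∑ j : Fin q, ∑ i ∈ Finset.univ.filter (fun i => P i = j),
            (f (κ i) - (dot (wstar (P i)) (κ i) + bstar (P i))) := by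
          rw [← Finset.mul_sum]
          congr 1
          refine Finset.sum_congr rfl fun j _ => Finset.sum_congr rfl fun i hi => ?_
          rw [(Finset.mem_filter.mp hi).2]
      _ = (1/N) * ∑ i : Fin N, (f (κ i) - (dot (wstar (P i)) (κ i) + bstar (P i))) := by
          rw [Finset.sum_fiberwise]
      _ = βstar := by
          rw [hopt]
          congr 1
          exact Finset.sum_congr rfl fun i _ => by rw [hP i]
  · -- βstar ≤ ∑ βj
    choose w b hfeasj hval using fun j => (hβj j).1
    have hfeas' : ∀ i : Fin N, fmax (fun j => dot (w j) (κ i) + b j) ≤ f (κ i) := by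
      intro i
      exact Finset.sup'_le _ _ fun j _ => hfeasj j i
    have h2 : βstar ≤ (1/N) * ∑ i : Fin N,
        (f (κ i) - fmax (fun j => dot (w j) (κ i) + b j)) :=
      hβstar.2 ⟨w, b, hfeas', rfl⟩
    calc βstar ≤ (1/N) * ∑ i : Fin N,
          (f (κ i) - fmax (fun j => dot (w j) (κ i) + b j)) := h2
      _ ≤ (1/N) * ∑ i : Fin N, (f (κ i) - (dot (w (P i)) (κ i) + b (P i))) := by
          apply mul_le_mul_of_nonneg_left _ hN
          refine Finset.sum_le_sum fun i _ => ?_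
          have : dot (w (P i)) (κ i) + b (P i) ≤ fmax (fun j => dot (w j) (κ i) + b j) :=
            Finset.le_sup' (f := fun j => dot (w j) (κ i) + b j) (Finset.mem_univ (P i))
          linarith
      _ = (1/N) * ∑ j : Fin q, ∑ i ∈ Finset.univ.filter (fun i => P i = j),
            (f (κ i) - (dot (w (P i)) (κ i) + b (P i))) := by
          rw [Finset.sum_fiberwise]
      _ = ∑ j : Fin q, βj j := by
          rw [Finset.mul_sum]
          refine Finset.sum_congr rfl fun j _ => ?_
          rw [hval j]
          congr 1
          refine Finset.sum_congr rfl fun i hi => ?_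
          rw [(Finset.mem_filter.mp hi).2]
end

section
/- Let f : ℝ^d → ℝ be Lipschitz continuous, and let Diff be the set of points where f is differentiable. Then for all κ₁, κ₂ ∈ ℝ^d, |f(κ₁) − f(κ₂)| ≤ sup_{κ ∈ Diff} |∇f(κ)ᵀ(κ₂ − κ₁)|. -/
open MeasureTheory Filter Set Topology intervalIntegral

/-- Fundamental-theorem-of-calculus style bound for Lipschitz functions on `[0,1]`:
if the (a.e. existing) derivative is a.e. bounded by `M` in absolute value, then
`|g 1 - g 0| ≤ M`. -/
lemma aux_lipschitz_sub_le {g : ℝ → ℝ} {L : NNReal} (hg : LipschitzWith L g) {M : ℝ}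
    (hM : ∀ᵐ t : ℝ, DifferentiableAt ℝ g t → |deriv g t| ≤ M) :
    |g 1 - g 0| ≤ M := by
  have hcont : Continuous g := hg.continuous
  have hdiff : ∀ᵐ t : ℝ, DifferentiableAt ℝ g t := hg.ae_differentiableAt_real
  -- the derivative is bounded by `L` everywhere (it is `0` at non-differentiability points)
  have hLb : ∀ t, |deriv g t| ≤ (L : ℝ) := by
    intro t
    by_cases h : DifferentiableAt ℝ g t
    · have h1 : deriv g t = fderiv ℝ g t 1 := rfl
      have h2 : ‖fderiv ℝ g t 1‖ ≤ ‖fderiv ℝ g t‖ * ‖(1 : ℝ)‖ :=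
        (fderiv ℝ g t).le_opNorm 1
      have h3 : ‖fderiv ℝ g t‖ ≤ (L : ℝ) := norm_fderiv_le_of_lipschitz ℝ hg
      calc |deriv g t| = ‖fderiv ℝ g t 1‖ := by rw [h1]; rfl
        _ ≤ ‖fderiv ℝ g t‖ * ‖(1 : ℝ)‖ := h2
        _ = ‖fderiv ℝ g t‖ := by simp
        _ ≤ (L : ℝ) := h3
    · simp [deriv_zero_of_not_differentiableAt h, L.coe_nonneg]
  -- the sequence `u n = 1/(n+1)` tends to `0` within `{0}ᶜ`
  set u : ℕ → ℝ := fun n => 1 / (n + 1) with hu_def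
  have hu_pos : ∀ n, 0 < u n := fun n => by positivity
  have hu0 : Tendsto u atTop (𝓝 0) := tendsto_one_div_add_atTop_nhds_zero_nat
  have hu : Tendsto u atTop (𝓝[≠] 0) := by
    apply tendsto_nhdsWithin_of_tendsto_nhds_of_eventually_within _ hu0
    filter_upwards with n using (hu_pos n).ne'
  -- integrability facts
  have hg_int : ∀ a b : ℝ, IntervalIntegrable g volume a b :=
    fun a b => hcont.intervalIntegrable a b
  have hderiv_meas : Measurable (deriv g) := measurable_deriv g
  have hderiv_int : IntegrableOn (deriv g) (Ioc (0 : ℝ) 1) := by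
    refine ⟨hderiv_meas.aestronglyMeasurable.restrict, ?_⟩
    exact MeasureTheory.HasFiniteIntegral.of_bounded (C := (L : ℝ))
      (ae_of_all _ fun t => hLb t)
  -- Step B : the difference quotients of the integral converge to endpoint values
  have hF1 : HasDerivAt (fun x => ∫ t in (1 : ℝ)..x, g t) (g 1) 1 :=
    integral_hasDerivAt_right (hg_int 1 1)
      (hcont.stronglyMeasurableAtFilter _ _) hcont.continuousAt
  have hF0 : HasDerivAt (fun x => ∫ t in (0 : ℝ)..x, g t) (g 0) 0 :=
    integral_hasDerivAt_right (hg_int 0 0)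
      (hcont.stronglyMeasurableAtFilter _ _) hcont.continuousAt
  have hB1 : Tendsto (fun n => (u n)⁻¹ * ∫ t in (1 : ℝ)..(1 + u n), g t) atTop (𝓝 (g 1)) := by
    have hslope := hasDerivAt_iff_tendsto_slope.1 hF1
    have hmap : Tendsto (fun n => 1 + u n) atTop (𝓝[≠] (1 : ℝ)) := by
      apply tendsto_nhdsWithin_of_tendsto_nhds_of_eventually_within
      · simpa using tendsto_const_nhds.add hu0
      · filter_upwards with n
        have := (hu_pos n).ne'
        simp only [mem_compl_iff, mem_singleton_iff]
        intro h
        exact this (by linarith)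
    have := hslope.comp hmap
    refine this.congr fun n => ?_
    simp only [Function.comp_apply, slope_def_field]
    rw [div_eq_inv_mul]
    norm_num
  have hB0 : Tendsto (fun n => (u n)⁻¹ * ∫ t in (0 : ℝ)..(u n), g t) atTop (𝓝 (g 0)) := by
    have hslope := hasDerivAt_iff_tendsto_slope.1 hF0
    have hmap : Tendsto u atTop (𝓝[≠] (0 : ℝ)) := hu
    have := hslope.comp hmap
    refine this.congr fun n => ?_
    simp only [Function.comp_apply, slope_def_field]
    rw [div_eq_inv_mul]
    norm_num
  -- Step A : identity between the integral of difference quotients and endpoint integrals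
  have hA : ∀ n, (∫ t in (0 : ℝ)..1, (g (t + u n) - g t) / (u n)) =
      (u n)⁻¹ * (∫ t in (1 : ℝ)..(1 + u n), g t) - (u n)⁻¹ * (∫ t in (0 : ℝ)..(u n), g t) := by
    intro n
    have hint1 : IntervalIntegrable (fun t => g (t + u n)) volume 0 1 :=
      (hcont.comp (continuous_id.add continuous_const)).intervalIntegrable 0 1
    have h1 : (∫ t in (0 : ℝ)..1, (g (t + u n) - g t) / (u n)) =
        (u n)⁻¹ * ((∫ t in (0 : ℝ)..1, g (t + u n)) - ∫ t in (0 : ℝ)..1, g t) := by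
      simp only [div_eq_inv_mul]
      rw [intervalIntegral.integral_const_mul, intervalIntegral.integral_sub hint1 (hg_int 0 1)]
    have h2 : (∫ t in (0 : ℝ)..1, g (t + u n)) = ∫ t in (u n)..(1 + u n), g t := by
      simpa using intervalIntegral.integral_comp_add_right (a := (0:ℝ)) (b := 1) g (u n)
    have h3 : (∫ t in (u n)..(1 + u n), g t) - (∫ t in (0 : ℝ)..1, g t)
        = (∫ t in (1 : ℝ)..(1 + u n), g t) - ∫ t in (0 : ℝ)..(u n), g t := by
      have e1 : (∫ t in (u n)..(1 + u n), g t)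
          = (∫ t in (u n)..(1 : ℝ), g t) + ∫ t in (1 : ℝ)..(1 + u n), g t :=
        (intervalIntegral.integral_add_adjacent_intervals (hg_int _ _) (hg_int _ _)).symm
      have e2 : (∫ t in (0 : ℝ)..1, g t)
          = (∫ t in (0 : ℝ)..(u n), g t) + ∫ t in (u n)..(1 : ℝ), g t :=
        (intervalIntegral.integral_add_adjacent_intervals (hg_int _ _) (hg_int _ _)).symm
      rw [e1, e2]; ring
    rw [h1, h2, h3, mul_sub]
  -- Step C : dominated convergence
  have hC : Tendsto (fun n => ∫ t in (0 : ℝ)..1, (g (t + u n) - g t) / (u n)) atTop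
      (𝓝 (∫ t in (0 : ℝ)..1, deriv g t)) := by
    rw [intervalIntegral.integral_of_le (zero_le_one' ℝ)]
    have := MeasureTheory.tendsto_integral_of_dominated_convergence
      (μ := volume.restrict (Ioc (0:ℝ) 1))
      (F := fun n t => (g (t + u n) - g t) / (u n)) (f := deriv g)
      (bound := fun _ => (L : ℝ)) ?_ ?_ ?_ ?_
    · refine Tendsto.congr (fun n => ?_) this
      rw [intervalIntegral.integral_of_le (zero_le_one' ℝ)]
    · intro n
      exact ((hcont.comp (continuous_id.add continuous_const)).sub hcont).div_const
        (u n) |>.aestronglyMeasurable.restrict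
    · exact integrable_const _
    · intro n
      refine ae_of_all _ fun t => ?_
      have hne := (hu_pos n).ne'
      rw [Real.norm_eq_abs, abs_div, abs_of_pos (hu_pos n)]
      rw [div_le_iff₀ (hu_pos n)]
      calc |g (t + u n) - g t| ≤ (L : ℝ) * |t + u n - t| := by
            simpa [Real.dist_eq] using hg.dist_le_mul (t + u n) t
        _ = (L : ℝ) * u n := by rw [add_sub_cancel_left, abs_of_pos (hu_pos n)]
    · have : ∀ᵐ t ∂(volume.restrict (Ioc (0:ℝ) 1)), DifferentiableAt ℝ g t :=
        ae_restrict_of_ae hdiff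
      filter_upwards [this] with t ht
      have hslope := hasDerivAt_iff_tendsto_slope.1 ht.hasDerivAt
      have hmap : Tendsto (fun n => t + u n) atTop (𝓝[≠] t) := by
        apply tendsto_nhdsWithin_of_tendsto_nhds_of_eventually_within
        · simpa using tendsto_const_nhds.add hu0
        · filter_upwards with n
          simp only [mem_compl_iff, mem_singleton_iff]
          intro h
          exact (hu_pos n).ne' (by linarith)
      have := hslope.comp hmap
      refine this.congr fun n => ?_
      simp only [Function.comp_apply, slope_def_field, add_sub_cancel_left]
  -- combine to get the FTC identity
  have hkey : g 1 - g 0 = ∫ t in (0 : ℝ)..1, deriv g t := by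
    have h1 : Tendsto (fun n => ∫ t in (0 : ℝ)..1, (g (t + u n) - g t) / (u n)) atTop
        (𝓝 (g 1 - g 0)) := by
      have := hB1.sub hB0
      refine Tendsto.congr (fun n => (hA n).symm) this
    exact tendsto_nhds_unique h1 hC
  -- conclude with the a.e. bound
  rw [hkey, intervalIntegral.integral_of_le (zero_le_one' ℝ)]
  have hbound : ∀ᵐ t ∂(volume.restrict (Ioc (0:ℝ) 1)), ‖deriv g t‖ ≤ M := by
    have h0 : ∀ᵐ t : ℝ, |deriv g t| ≤ M := hdiff.mp (hM.mono fun t h ht => h ht)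
    have h1 : ∀ᵐ t ∂(volume.restrict (Ioc (0:ℝ) 1)), |deriv g t| ≤ M := ae_restrict_of_ae h0
    filter_upwards [h1] with t ht using ht
  calc ‖∫ t in Ioc (0:ℝ) 1, deriv g t‖ ≤ ∫ _ in Ioc (0:ℝ) 1, M :=
        MeasureTheory.norm_integral_le_of_norm_le (integrable_const M) hbound
    _ = M := by simp

theorem stmt12 {d : ℕ} (f : EuclideanSpace ℝ (Fin d) → ℝ) (K : NNReal)
    (hf : LipschitzWith K f) (κ₁ κ₂ : EuclideanSpace ℝ (Fin d)) :
    |f κ₁ - f κ₂| ≤ sSup {x : ℝ | ∃ κ, DifferentiableAt ℝ f κ ∧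
      x = |(inner ℝ (gradient f κ) (κ₂ - κ₁) : ℝ)|} := by
  set v : EuclideanSpace ℝ (Fin d) := κ₂ - κ₁ with hv
  set S : Set ℝ := {x : ℝ | ∃ κ, DifferentiableAt ℝ f κ ∧
      x = |(inner ℝ (gradient f κ) v : ℝ)|} with hS
  set M : ℝ := sSup S with hMdef
  -- inner product with gradient equals fderiv applied
  have hgrad : ∀ κ : EuclideanSpace ℝ (Fin d), (inner ℝ (gradient f κ) v : ℝ) = fderiv ℝ f κ v := by
    intro κ
    simp only [gradient]
    exact InnerProductSpace.toDual_symm_apply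
  -- S is bounded above
  have hBdd : BddAbove S := by
    refine ⟨(K : ℝ) * ‖v‖, fun x hx => ?_⟩
    obtain ⟨κ, -, rfl⟩ := hx
    rw [hgrad]
    calc |fderiv ℝ f κ v| ≤ ‖fderiv ℝ f κ‖ * ‖v‖ := (fderiv ℝ f κ).le_opNorm v
      _ ≤ (K : ℝ) * ‖v‖ := by
          gcongr
          exact norm_fderiv_le_of_lipschitz ℝ hf
  have hmem : ∀ κ : EuclideanSpace ℝ (Fin d), DifferentiableAt ℝ f κ → |(inner ℝ (gradient f κ) v : ℝ)| ≤ M :=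
    fun κ hκ => le_csSup hBdd ⟨κ, hκ, rfl⟩
  -- Rademacher
  have hrad : ∀ᵐ y ∂(volume : Measure (EuclideanSpace ℝ (Fin d))), y ∈ {x : EuclideanSpace ℝ (Fin d) | DifferentiableAt ℝ f x} :=
    hf.ae_differentiableAt
  -- disintegration: for a.e. y, for a.e. t, f is differentiable at y + t • v
  have hae : ∀ᵐ y ∂(volume : Measure (EuclideanSpace ℝ (Fin d))), ∀ᵐ t : ℝ,
      y + (LinearMap.toSpanSingleton ℝ (EuclideanSpace ℝ (Fin d)) v) t ∈ {x : EuclideanSpace ℝ (Fin d) | DifferentiableAt ℝ f x} := by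
    rw [MeasureTheory.ae_ae_add_linearMap_mem_iff (LinearMap.toSpanSingleton ℝ (EuclideanSpace ℝ (Fin d)) v)
      volume volume (measurableSet_of_differentiableAt ℝ f)]
    exact hrad
  -- for a.e. y, the increment along v is bounded by M
  have hstep : ∀ᵐ y ∂(volume : Measure (EuclideanSpace ℝ (Fin d))), |f (y + v) - f y| ≤ M := by
    filter_upwards [hae] with y hy
    set g : ℝ → ℝ := fun t => f (y + t • v) with hgdef
    have hgl : LipschitzWith (K * ‖v‖₊) g := by
      have hc : LipschitzWith ‖v‖₊ (fun t : ℝ => y + t • v) := by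
        have : LipschitzWith ‖v‖₊ (fun t : ℝ => t • v) := by
          apply LipschitzWith.of_dist_le_mul
          intro a b
          simp only [dist_eq_norm, ← sub_smul, norm_smul, Real.norm_eq_abs, Real.dist_eq,
            coe_nnnorm]
          rw [mul_comm]
        exact (LipschitzWith.const y).add this |>.weaken (by simp)
      exact hf.comp hc
    have hgM : ∀ᵐ t : ℝ, DifferentiableAt ℝ g t → |deriv g t| ≤ M := by
      filter_upwards [hy] with t ht _
      have hft : DifferentiableAt ℝ f (y + t • v) := ht
      have hc : HasDerivAt (fun s : ℝ => y + s • v) v t := by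
        have := ((hasDerivAt_id t).smul_const v).const_add y
        simpa using this
      have hgd : HasDerivAt g (fderiv ℝ f (y + t • v) v) t :=
        hft.hasFDerivAt.comp_hasDerivAt t hc
      rw [hgd.deriv, ← hgrad]
      exact hmem _ hft
    have := aux_lipschitz_sub_le hgl hgM
    simpa [hgdef] using this
  -- upgrade a.e. to everywhere by continuity
  have hall : ∀ y : EuclideanSpace ℝ (Fin d), |f (y + v) - f y| ≤ M := by
    have hdense : Dense {y : EuclideanSpace ℝ (Fin d) | |f (y + v) - f y| ≤ M} :=
      MeasureTheory.Measure.dense_of_ae hstep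
    have hclosed : IsClosed {y : EuclideanSpace ℝ (Fin d) | |f (y + v) - f y| ≤ M} := by
      apply isClosed_le _ continuous_const
      exact ((hf.continuous.comp (continuous_id.add continuous_const)).sub
        hf.continuous).abs
    intro y
    have heq := hdense.closure_eq
    rw [hclosed.closure_eq] at heq
    have : y ∈ {y : EuclideanSpace ℝ (Fin d) | |f (y + v) - f y| ≤ M} := by
      rw [heq]; exact mem_univ y
    exact this
  have := hall κ₁
  rw [hv, add_sub_cancel] at this
  rwa [abs_sub_comm]
end

section
/- Let f : ℝ^d → ℝ be Lipschitz continuous, Diff its set of differentiability points, e_m the m-th standard basis vector, and L_m = sup_{κ∈Diff} |∇f(κ)ᵀe_m| for m = 1,…,d. Then for all κ₁, κ₂ ∈ ℝ^d, |f(κ₁) − f(κ₂)| ≤ ∑_{m=1}^d L_m |κ₁(m) − κ₂(m)|. -/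
/-!
A Lipschitz `f` is differentiable almost everywhere (Rademacher), and at every differentiability
point `|∇f(κ)ᵀv| ≤ ∑ₘ |∂ₘ f(κ)| |v(m)| ≤ ∑ₘ Lₘ |v(m)|`. So for `v = κ₁ - κ₂` the directional
derivative of `f` along `v` obeys this bound almost everywhere. The segment from `κ₂` to `κ₁` may
avoid the differentiability set, so the bound is transferred to the mollifications `ψ_ε ⋆ f`:
integrating by parts, `∂ᵥ(ψ_ε ⋆ f) = ψ_ε ⋆ ∂ᵥ f`, which satisfies the bound everywhere. The mean
value theorem on the segment, together with `|ψ_ε ⋆ f - f| ≤ K ε`, gives the claim as `ε → 0`.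
-/

open MeasureTheory Topology ContinuousLinearMap
open scoped Convolution

theorem Module.Basis.abs_apply_le_sum {ι M : Type*} [Fintype ι] [AddCommGroup M] [Module ℝ M]
    (b : Module.Basis ι ℝ M) (ℓ : M →ₗ[ℝ] ℝ) (v : M) :
    |ℓ v| ≤ ∑ i, |b.repr v i| * |ℓ (b i)| := by
  conv_lhs => rw [← b.sum_repr v]
  simpa only [map_sum, map_smul, smul_eq_mul, abs_mul] using
    Finset.abs_sum_le_sum_abs (fun i => b.repr v i * ℓ (b i)) Finset.univ

section Mollification

variable {E : Type*} [NormedAddCommGroup E] [NormedSpace ℝ E]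

theorem lineDeriv_comp_sub_left {ψ : E → ℝ} (hψ : Differentiable ℝ ψ) (x t v : E) :
    lineDeriv ℝ (fun y => ψ (x - y)) t (-v) = fderiv ℝ ψ (x - t) v := by
  have hline : (fun s : ℝ => ψ (x - (t + s • -v))) = fun s => ψ (x - t + s • v) := by
    funext s; congr 1; module
  rw [lineDeriv, hline, ← lineDeriv, (hψ _).lineDeriv_eq_fderiv]

theorem abs_sub_le_of_forall_abs_fderiv_apply_le {g : E → ℝ} (hg : Differentiable ℝ g) {v : E}
    {C : ℝ} (hC : ∀ y, |fderiv ℝ g y v| ≤ C) (x : E) : |g (x + v) - g x| ≤ C := by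
  have hderiv (s : ℝ) :
      HasDerivAt (fun s : ℝ => g (x + s • v)) (fderiv ℝ g (x + s • v) v) s := by
    have hline : HasDerivAt (fun s : ℝ => x + s • v) v s := by
      simpa using ((hasDerivAt_id s).smul_const v).const_add x
    exact (hg _).hasFDerivAt.comp_hasDerivAt s hline
  simpa [Real.norm_eq_abs] using norm_image_sub_le_of_norm_deriv_le_segment_01'
    (fun s _ => (hderiv s).hasDerivWithinAt) (fun s _ => hC _)

variable [FiniteDimensional ℝ E] [MeasurableSpace E] [BorelSpace E] {μ : Measure E}
  [μ.IsAddHaarMeasure] {K : NNReal} {f : E → ℝ}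

namespace LipschitzWith

theorem fderiv_convolution_apply (hf : LipschitzWith K f) {ψ : E → ℝ}
    (hψ : ContDiff ℝ 1 ψ) (hψc : HasCompactSupport ψ) (x v : E) :
    fderiv ℝ (ψ ⋆[lsmul ℝ ℝ, μ] f) x v = ∫ t, lineDeriv ℝ f t v * ψ (x - t) ∂μ := by
  have hloc : LocallyIntegrable f μ := hf.continuous.locallyIntegrable
  have hψc' : HasCompactSupport fun t => ψ (x - t) := hψc.comp_homeomorph (Homeomorph.subLeft x)
  obtain ⟨C, hC⟩ := ContDiff.lipschitzWith_of_hasCompactSupport hψc'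
    (hψ.comp (contDiff_const.sub contDiff_id)) one_ne_zero
  have hIBP := hf.integral_lineDeriv_mul_eq (μ := μ) hC hψc' v
  rw [← convolution_flip, (hψc.hasFDerivAt_convolution_right _ hloc hψ x).fderiv,
    convolution_precompR_apply _ hloc (hψc.fderiv ℝ) (hψ.continuous_fderiv one_ne_zero),
    convolution_def, hIBP]
  simp [lineDeriv_comp_sub_left (hψ.differentiable one_ne_zero), mul_comm]

theorem abs_fderiv_normed_convolution_apply_le (hf : LipschitzWith K f)
    (φ : ContDiffBump (0 : E)) {v : E} {C : ℝ} (hC : ∀ᵐ t ∂μ, |lineDeriv ℝ f t v| ≤ C) (x : E) :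
    |fderiv ℝ (φ.normed μ ⋆[lsmul ℝ ℝ, μ] f) x v| ≤ C := by
  rw [hf.fderiv_convolution_apply φ.contDiff_normed φ.hasCompactSupport_normed]
  calc |∫ t, lineDeriv ℝ f t v * φ.normed μ (x - t) ∂μ|
      ≤ ∫ t, C * φ.normed μ (x - t) ∂μ := by
        rw [← Real.norm_eq_abs]
        refine norm_integral_le_of_norm_le
          (((φ.integrable_normed (μ := μ)).comp_sub_left x).const_mul C) ?_
        filter_upwards [hC] with t ht
        rw [Real.norm_eq_abs, abs_mul, abs_of_nonneg (φ.nonneg_normed _)]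
        exact mul_le_mul_of_nonneg_right ht (φ.nonneg_normed _)
    _ = C := by
        rw [integral_const_mul, integral_sub_left_eq_self (fun t => φ.normed μ t) μ x,
          φ.integral_normed, mul_one]

theorem dist_normed_convolution_le (hf : LipschitzWith K f) (φ : ContDiffBump (0 : E)) (x : E) :
    dist ((φ.normed μ ⋆[lsmul ℝ ℝ, μ] f) x) (f x) ≤ K * φ.rOut :=
  φ.dist_normed_convolution_le hf.continuous.aestronglyMeasurable fun y hy =>
    (hf.dist_le_mul y x).trans (mul_le_mul_of_nonneg_left (Metric.mem_ball.1 hy).le K.coe_nonneg)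

theorem abs_sub_le_of_ae_abs_lineDeriv_le (hf : LipschitzWith K f) {v : E} {C : ℝ}
    (hC : ∀ᵐ t ∂μ, |lineDeriv ℝ f t v| ≤ C) (x : E) : |f (x + v) - f x| ≤ C := by
  have hbound : ∀ ε > 0, |f (x + v) - f x| ≤ C + 2 * K * ε := by
    intro ε hε
    let φ : ContDiffBump (0 : E) := ⟨ε / 2, ε, half_pos hε, half_lt_self hε⟩
    set g := φ.normed μ ⋆[lsmul ℝ ℝ, μ] f
    have hg : Differentiable ℝ g :=
      (φ.hasCompactSupport_normed.contDiff_convolution_left (n := 1) _ φ.contDiff_normed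
        hf.continuous.locallyIntegrable).differentiable one_ne_zero
    have hmvt : |g (x + v) - g x| ≤ C := abs_sub_le_of_forall_abs_fderiv_apply_le hg
      (hf.abs_fderiv_normed_convolution_apply_le φ hC) x
    have hclose (y : E) : |g y - f y| ≤ K * ε := hf.dist_normed_convolution_le φ y
    have hclose₀ := abs_le.1 (hclose x)
    have hclose₁ := abs_le.1 (hclose (x + v))
    rw [abs_le] at hmvt ⊢
    constructor <;> linarith
  refine ge_of_tendsto (x := 𝓝[>] (0 : ℝ)) ?_
    (eventually_nhdsWithin_of_forall fun ε hε => hbound ε hε)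
  exact tendsto_nhdsWithin_of_tendsto_nhds
    ((continuous_const.add (continuous_const.mul continuous_id)).tendsto' 0 C (by simp))

end LipschitzWith

end Mollification

theorem stmt13 {d : ℕ} (f : EuclideanSpace ℝ (Fin d) → ℝ) (K : NNReal)
    (hf : LipschitzWith K f) (L : Fin d → ℝ)
    (hL : ∀ m : Fin d, L m = sSup {x : ℝ | ∃ κ, DifferentiableAt ℝ f κ ∧
      x = |(inner ℝ (gradient f κ) (EuclideanSpace.single m (1 : ℝ)) : ℝ)|}) :
    ∀ κ₁ κ₂ : EuclideanSpace ℝ (Fin d),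
      |f κ₁ - f κ₂| ≤ ∑ m, L m * |κ₁ m - κ₂ m| := by
  intro κ₁ κ₂
  have hpartial : ∀ κ, DifferentiableAt ℝ f κ →
      ∀ m, |fderiv ℝ f κ (EuclideanSpace.single m 1)| ≤ L m := by
    intro κ hκ m
    rw [hL m]
    refine le_csSup ⟨K, ?_⟩ ⟨κ, hκ, by rw [gradient, InnerProductSpace.toDual_symm_apply]⟩
    rintro _ ⟨κ', -, rfl⟩
    rw [gradient, InnerProductSpace.toDual_symm_apply, ← Real.norm_eq_abs]
    calc _ ≤ ‖fderiv ℝ f κ'‖ * ‖EuclideanSpace.single m (1 : ℝ)‖ := (fderiv ℝ f κ').le_opNorm _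
      _ ≤ K := by simpa using norm_fderiv_le_of_lipschitz ℝ hf
  have hdir : ∀ᵐ κ, |lineDeriv ℝ f κ (κ₁ - κ₂)| ≤ ∑ m, L m * |κ₁ m - κ₂ m| := by
    filter_upwards [hf.ae_differentiableAt] with κ hκ
    rw [hκ.lineDeriv_eq_fderiv]
    refine ((EuclideanSpace.basisFun _ ℝ).toBasis.abs_apply_le_sum
      (fderiv ℝ f κ).toLinearMap _).trans (Finset.sum_le_sum fun m _ => ?_)
    simpa [mul_comm] using mul_le_mul_of_nonneg_left (hpartial κ hκ m) (abs_nonneg (κ₁ m - κ₂ m))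
  simpa using hf.abs_sub_le_of_ae_abs_lineDeriv_le hdir κ₂
end
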